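/- Let b ≥ 8 and let F = F_{−1,b}. Then (−(b+2)/5, (2b−1)/5) is a fixed point of F lying in Q₂, and the sets X = {(−b, 1), (b−2, −1), (b−2, 2b−3)} and Q = {((2−b)/3, −1), ((b−2)/3, (2b−1)/3), (−(b+4)/3, (2b−1)/3)} are periodic orbits of F of minimal period 3, with F mapping each listed point to the next one and the last listed point to the first in each set. -/

import Mathlib

/-- The piecewise linear map `F_{a,b}(x,y) = (|x| - y + a, x - |y| + b)`. -/
noncomputable def F (a b : ℝ) : ℝ × ℝ → ℝ × ℝ :=
  fun p => (|p.1| - p.2 + a, p.1 - |p.2| + b)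

/-- The closed second quadrant. -/
def Q2 : Set (ℝ × ℝ) := {p | p.1 ≤ 0 ∧ 0 ≤ p.2}

/-- `S` is a periodic orbit of `f` of minimal period `n`: it is the (finite) orbit
`{p, f p, …, f^[n-1] p}` of some periodic point `p` of minimal period `n`. -/
def IsPeriodicOrbit (f : ℝ × ℝ → ℝ × ℝ) (n : ℕ) (S : Set (ℝ × ℝ)) : Prop :=
  ∃ p : ℝ × ℝ, Function.minimalPeriod f p = n ∧ 0 < n ∧
    S = (fun k : ℕ => f^[k] p) '' Set.Iio n

/-! Each listed point lies in a closed quadrant of the plane, where `F_{a,b}` is affine, so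
every claimed image is a linear computation once the signs of the coordinates are known
(this is where `b ≥ 2` enters). A 3-cycle whose first point is not fixed has minimal
period 3 because 3 is prime. -/

section Quadrants

variable {a b x y : ℝ}

lemma F_of_nonneg_nonneg (hx : 0 ≤ x) (hy : 0 ≤ y) : F a b (x, y) = (x - y + a, x - y + b) := by
  simp only [F, abs_of_nonneg hx, abs_of_nonneg hy]

lemma F_of_nonneg_nonpos (hx : 0 ≤ x) (hy : y ≤ 0) : F a b (x, y) = (x - y + a, x + y + b) := by
  simp only [F, abs_of_nonneg hx, abs_of_nonpos hy, sub_neg_eq_add]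

lemma F_of_nonpos_nonneg (hx : x ≤ 0) (hy : 0 ≤ y) : F a b (x, y) = (-x - y + a, x - y + b) := by
  simp only [F, abs_of_nonpos hx, abs_of_nonneg hy]

lemma F_of_nonpos_nonpos (hx : x ≤ 0) (hy : y ≤ 0) : F a b (x, y) = (-x - y + a, x + y + b) := by
  simp only [F, abs_of_nonpos hx, abs_of_nonpos hy, sub_neg_eq_add]

end Quadrants

lemma isPeriodicOrbit_three {f : ℝ × ℝ → ℝ × ℝ} {p q r : ℝ × ℝ} (hpq : f p = q)
    (hqr : f q = r) (hrp : f r = p) (hne : p ≠ q) : IsPeriodicOrbit f 3 {p, q, r} := by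
  have : Fact (Nat.Prime 3) := ⟨Nat.prime_three⟩
  have hper : Function.IsPeriodicPt f 3 p := by
    simp only [Function.IsPeriodicPt, Function.IsFixedPt, Function.iterate_succ_apply',
      Function.iterate_zero_apply, hpq, hqr, hrp]
  have hnotfix : ¬Function.IsFixedPt f p := fun h => hne (h.symm.trans hpq)
  refine ⟨p, Function.minimalPeriod_eq_prime hper hnotfix, three_pos, ?_⟩
  have hIio : Set.Iio 3 = ({0, 1, 2} : Set ℕ) := by
    ext k
    simp only [Set.mem_Iio, Set.mem_insert_iff, Set.mem_singleton_iff]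
    omega
  simp [hIio, Set.image_insert_eq, Function.iterate_succ_apply', hpq, hqr]

section Cycles

variable {b : ℝ}

lemma F_fixedPoint (hb : 1 / 2 ≤ b) :
    F (-1) b (-(b+2)/5, (2*b-1)/5) = (-(b+2)/5, (2*b-1)/5) := by
  rw [F_of_nonpos_nonneg (by linarith) (by linarith)]
  ext <;> ring

lemma F_cycle_X (hb : 2 ≤ b) :
    F (-1) b (-b, 1) = (b-2, -1) ∧
      F (-1) b (b-2, -1) = (b-2, 2*b-3) ∧
      F (-1) b (b-2, 2*b-3) = (-b, 1) := by
  refine ⟨?_, ?_, ?_⟩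
  · rw [F_of_nonpos_nonneg (by linarith) zero_le_one]; ext <;> ring
  · rw [F_of_nonneg_nonpos (by linarith) (by norm_num)]; ext <;> ring
  · rw [F_of_nonneg_nonneg (by linarith) (by linarith)]; ext <;> ring

lemma F_cycle_Q (hb : 2 ≤ b) :
    F (-1) b ((2-b)/3, -1) = ((b-2)/3, (2*b-1)/3) ∧
      F (-1) b ((b-2)/3, (2*b-1)/3) = (-(b+4)/3, (2*b-1)/3) ∧
      F (-1) b (-(b+4)/3, (2*b-1)/3) = ((2-b)/3, -1) := by
  refine ⟨?_, ?_, ?_⟩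
  · rw [F_of_nonpos_nonpos (by linarith) (by norm_num)]; ext <;> ring
  · rw [F_of_nonneg_nonneg (by linarith) (by linarith)]; ext <;> ring
  · rw [F_of_nonpos_nonneg (by linarith) (by linarith)]; ext <;> ring

end Cycles

/-- For `b ≥ 8` and `F = F_{-1,b}`: the fixed point `(-(b+2)/5, (2b-1)/5)` lies in
`Q₂`, and the sets `X` and `Q` below are periodic orbits of minimal period 3, `F`
mapping each listed point to the next one and the last to the first. -/
theorem case_b_ge_eight (b : ℝ) (hb : 8 ≤ b) :
    F (-1) b (-(b+2)/5, (2*b-1)/5) = (-(b+2)/5, (2*b-1)/5) ∧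
    (-(b+2)/5, (2*b-1)/5) ∈ Q2 ∧
    (IsPeriodicOrbit (F (-1) b) 3 {(-b, 1), (b-2, -1), (b-2, 2*b-3)} ∧
      F (-1) b (-b, 1) = (b-2, -1) ∧
      F (-1) b (b-2, -1) = (b-2, 2*b-3) ∧
      F (-1) b (b-2, 2*b-3) = (-b, 1)) ∧
    (IsPeriodicOrbit (F (-1) b) 3
        {((2-b)/3, -1), ((b-2)/3, (2*b-1)/3), (-(b+4)/3, (2*b-1)/3)} ∧
      F (-1) b ((2-b)/3, -1) = ((b-2)/3, (2*b-1)/3) ∧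
      F (-1) b ((b-2)/3, (2*b-1)/3) = (-(b+4)/3, (2*b-1)/3) ∧
      F (-1) b (-(b+4)/3, (2*b-1)/3) = ((2-b)/3, -1)) := by
  have hb2 : 2 ≤ b := by linarith
  obtain ⟨hX₁, hX₂, hX₃⟩ := F_cycle_X hb2
  obtain ⟨hQ₁, hQ₂, hQ₃⟩ := F_cycle_Q hb2
  have hneX : ((-b, 1) : ℝ × ℝ) ≠ (b-2, -1) := fun h => by
    have := congrArg Prod.snd h; norm_num at this
  have hneQ : (((2-b)/3, -1) : ℝ × ℝ) ≠ ((b-2)/3, (2*b-1)/3) := fun h => by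
    have := congrArg Prod.snd h; dsimp only at this; linarith
  refine ⟨F_fixedPoint (by linarith), ⟨?_, ?_⟩, ⟨isPeriodicOrbit_three hX₁ hX₂ hX₃ hneX, hX₁, hX₂, hX₃⟩,
    ⟨isPeriodicOrbit_three hQ₁ hQ₂ hQ₃ hneQ, hQ₁, hQ₂, hQ₃⟩⟩
  · change -(b+2)/5 ≤ 0; linarith
  · change 0 ≤ (2*b-1)/5; linarith
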